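/- arXiv:1510.02021 — 2 statements merged into one kernel-verified Lean document; each statement's English description precedes it below -/
import Mathlib

section
/- Let q be a prime power, r a positive integer, and c, u, v ∈ F_{q²} satisfy c + c^q = 0 and (u + v)^q = (−1)^r·(u + v). Then f(x) = (x^q − x + c)^r + u·x^q + v·x is a permutation polynomial of F_{q²} if and only if u^{q+1} ≠ v^{q+1}. -/
/-!
Let `σ x = x ^ q`, an involutive automorphism of `F_{q²}`, and `ε = (-1) ^ r`. Since `σ` negates
`x ^ q - x + c`, applying `σ` to `f` gives `σ (f x) - ε f x = (v ^ q - ε u) (x ^ q - x)`, and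
`u ^ (q + 1) - v ^ (q + 1) = -(u + v) (v ^ q - ε u)`. If both factors are nonzero, `f x = f y` forces
`x ^ q - x = y ^ q - y`, hence `(u + v) (x - y) = 0`. If `u + v = 0` then `f 1 = f 0`; if
`v ^ q = ε u` then every value `z` of `f` satisfies `z ^ q = ε z`, which fails somewhere on `F_{q²}`.
-/

open Polynomial

section Twisted

variable {R : Type*} [CommRing R]

/-- For `σ = (· ^ q)` this is the polynomial `f`. -/
def twistedMap (σ : R →+* R) (r : ℕ) (c u v : R) (x : R) : R :=
  (σ x - x + c) ^ r + u * σ x + v * x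

variable {σ : R →+* R} {r : ℕ} {c u v : R}

theorem twistedMap_map_sub (hσ : ∀ x, σ (σ x) = x) (hc : σ c = -c)
    (huv : σ (u + v) = (-1) ^ r * (u + v)) (x : R) :
    σ (twistedMap σ r c u v x) - (-1) ^ r * twistedMap σ r c u v x =
      (σ v - (-1) ^ r * u) * (σ x - x) := by
  have hneg : σ (σ x - x + c) = -(σ x - x + c) := by
    rw [map_add, map_sub, hσ, hc]
    ring
  rw [map_add] at huv
  rw [twistedMap, map_add, map_add, map_mul, map_mul, map_pow, hneg, hσ, neg_pow]
  linear_combination x * huv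

theorem map_mul_self_sub_map_mul_self (huv : σ (u + v) = (-1) ^ r * (u + v)) :
    σ u * u - σ v * v = -((u + v) * (σ v - (-1) ^ r * u)) := by
  rw [map_add] at huv
  linear_combination u * huv

variable [IsDomain R]

theorem map_mul_self_eq_iff (huv : σ (u + v) = (-1) ^ r * (u + v)) :
    σ u * u = σ v * v ↔ u + v = 0 ∨ σ v - (-1) ^ r * u = 0 := by
  rw [← sub_eq_zero, map_mul_self_sub_map_mul_self huv, neg_eq_zero, mul_eq_zero]

theorem twistedMap_injective (hσ : ∀ x, σ (σ x) = x) (hc : σ c = -c)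
    (huv : σ (u + v) = (-1) ^ r * (u + v)) (hsum : u + v ≠ 0) (ha : σ v - (-1) ^ r * u ≠ 0) :
    Function.Injective (twistedMap σ r c u v) := by
  intro x y hxy
  have htrace : σ x - x = σ y - y := mul_left_cancel₀ ha <| by
    rw [← twistedMap_map_sub hσ hc huv, ← twistedMap_map_sub hσ hc huv, hxy]
  have hpow : (σ x - x + c) ^ r = (σ y - y + c) ^ r := by rw [htrace]
  have hlin : (u + v) * (x - y) = 0 := by
    unfold twistedMap at hxy
    linear_combination hxy - hpow - u * htrace
  exact sub_eq_zero.mp ((mul_eq_zero.mp hlin).resolve_left hsum)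

theorem map_mul_self_ne_of_bijective (hσ : ∀ x, σ (σ x) = x) (hc : σ c = -c)
    (huv : σ (u + v) = (-1) ^ r * (u + v)) (hnontriv : ∃ x, σ x ≠ x)
    (hf : Function.Bijective (twistedMap σ r c u v)) : σ u * u ≠ σ v * v := by
  intro heq
  rcases (map_mul_self_eq_iff huv).mp heq with hsum | ha
  · refine one_ne_zero (hf.injective ?_)
    simp only [twistedMap, map_one, map_zero]
    linear_combination hsum
  · have hfix : ∀ z, σ z = (-1) ^ r * z := fun z => by
      obtain ⟨y, rfl⟩ := hf.surjective z
      linear_combination twistedMap_map_sub hσ hc huv y + (σ y - y) * ha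
    have hε : ((-1) ^ r : R) = 1 := by simpa using (hfix 1).symm
    obtain ⟨x, hx⟩ := hnontriv
    exact hx (by rw [hfix, hε, one_mul])

end Twisted

section FiniteField

variable {F : Type*} [Field F] [Fintype F] {q : ℕ}

theorem exists_ringHom_eq_pow_of_card_eq_sq (hq : IsPrimePow q) (hF : Fintype.card F = q ^ 2) :
    ∃ σ : F →+* F, ∀ x, σ x = x ^ q := by
  obtain ⟨p, n, hp, -, rfl⟩ := hq
  have hp' := hp.nat_prime
  have := Fact.mk hp'
  have hcast : ((p : F) ^ (n * 2)) = 0 := by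
    have := FiniteField.cast_card_eq_zero F
    rwa [hF, ← pow_mul, Nat.cast_pow] at this
  have : CharP F p := (CharP.charP_iff_prime_eq_zero hp').mpr (pow_eq_zero_iff'.mp hcast).1
  exact ⟨iterateFrobenius F p n, fun x => iterateFrobenius_def p n x⟩

theorem pow_pow_eq_self_of_card_eq_sq (hF : Fintype.card F = q ^ 2) (x : F) : (x ^ q) ^ q = x := by
  rw [← pow_mul, ← sq, ← hF, FiniteField.pow_card]

theorem exists_pow_ne_self_of_card_eq_sq (hq : 1 < q) (hF : Fintype.card F = q ^ 2) :
    ∃ x : F, x ^ q ≠ x := by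
  by_contra! h
  refine FiniteField.X_pow_card_sub_X_ne_zero F hq <|
    eq_zero_of_natDegree_lt_card_of_eval_eq_zero _ Function.injective_id (fun x => ?_) ?_
  · simp [h x]
  · rw [FiniteField.X_pow_card_sub_X_natDegree_eq F hq, hF]
    nlinarith

end FiniteField

theorem stmt_9_general {F : Type*} [Field F] [Fintype F]
    (q : ℕ) (hq : IsPrimePow q) (hF : Fintype.card F = q ^ 2)
    (r : ℕ)
    (c u v : F) (hc : c + c ^ q = 0)
    (huv : (u + v) ^ q = (-1 : F) ^ r * (u + v)) :
    Function.Bijective (fun x : F => (x ^ q - x + c) ^ r + u * x ^ q + v * x) ↔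
      u ^ (q + 1) ≠ v ^ (q + 1) := by
  obtain ⟨σ, hσq⟩ := exists_ringHom_eq_pow_of_card_eq_sq hq hF
  have hσ : ∀ x, σ (σ x) = x := fun x => by rw [hσq, hσq, pow_pow_eq_self_of_card_eq_sq hF]
  have hc' : σ c = -c := by rw [hσq]; linear_combination hc
  have huv' : σ (u + v) = (-1) ^ r * (u + v) := by rw [hσq]; exact huv
  have hf : (fun x : F => (x ^ q - x + c) ^ r + u * x ^ q + v * x) = twistedMap σ r c u v :=
    funext fun x => by simp only [twistedMap, hσq]
  rw [hf, pow_succ, pow_succ, ← hσq u, ← hσq v]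
  refine ⟨map_mul_self_ne_of_bijective hσ hc' huv' ?_, fun hne => ?_⟩
  · simpa only [hσq] using exists_pow_ne_self_of_card_eq_sq hq.two_le hF
  · rw [Ne, map_mul_self_eq_iff huv', not_or] at hne
    exact (Finite.injective_iff_bijective).mp (twistedMap_injective hσ hc' huv' hne.1 hne.2)

theorem stmt_9 {F : Type*} [Field F] [Fintype F]
    (q : ℕ) (hq : IsPrimePow q) (hF : Fintype.card F = q ^ 2)
    (r : ℕ) (hr : 0 < r)
    (c u v : F) (hc : c + c ^ q = 0)
    (huv : (u + v) ^ q = (-1 : F) ^ r * (u + v)) :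
    Function.Bijective (fun x : F => (x ^ q - x + c) ^ r + u * x ^ q + v * x) ↔
      u ^ (q + 1) ≠ v ^ (q + 1) :=
  stmt_9_general q hq hF r c u v hc huv
end

section
/- Let q be a prime power, let d be a positive divisor of q²−1 and write d = n·gcd(q+1, d). Let ξ be a primitive element of F_{q²}. Let a, b, c ∈ F_{q²} and j ∈ ℤ satisfy a·b ≠ 0, b = ξ^{(q−1)·j·(d/n)}·a^q and a·c^q = b^q·c. Let u, v ∈ F_{q²} satisfy u^{q+1} = v^{q+1} and b·u ≠ a·v, and let r be a positive integer with gcd(r, (q²−1)/d) = 1. Let φ be a polynomial with coefficients in the subfield F_q of F_{q²} and define f(x) = (a·x^q + b·x + c)^r · φ((a·x^q + b·x + c)^{(q²−1)/d}) + u·x^q + v·x. Then f is a permutation polynomial of F_{q²} if and only if B + A^{1−r}·B^{q·r} ≠ 0 and x^r·φ(x)^{(q²−1)/d} permutes U_n. -/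
/-!
Put `s = (q² - 1)/d`, `g y = y^r φ(y^s)`, `θ x = a x^q + b x` and `L x = u x^q + v x`, so that
`f x = g (θ x + c) + L x`. The additive map `T z = A z^q + B z` kills `L` and its kernel is exactly
`L (ker θ)`, so `f` is injective iff `T ∘ g` is injective on the image of `θ + c` (the AGW
criterion). As `a^{q+1} = b^{q+1}`, the image of `θ` is the `𝔽_q`-line `{y | a y^q = b^q y}`,
which contains `c`; the hypothesis on `b` provides a point `e` of this line with `e^s = 1`, and
then `T (g (t e)) = (B + A^{1-r} B^{qr}) e^r · t^r φ(t^s)` for `t ∈ 𝔽_q`. Finally `t ↦ t^r φ(t^s)`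
is injective on `𝔽_q` iff `x ↦ x^r φ(x)^s` permutes `U_n`, because `t ↦ t^s` maps `𝔽_q^*` onto
`U_n` and `gcd(r, s) = 1`.
-/

open Polynomial

theorem injective_comp_add_add_iff_injOn {M N P R : Type*} [AddCommGroup M] [AddCommGroup N]
    [AddCommGroup P] [AddCommGroup R] (θ : M →+ N) (L : M →+ P) (T : P →+ R) (g : N → P) (c : N)
    (hTL : ∀ x, T (L x) = 0) (hL : ∀ k, θ k = 0 → L k = 0 → k = 0)
    (hT : ∀ z, T z = 0 → ∃ k, θ k = 0 ∧ L k = z) :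
    Function.Injective (fun x => g (θ x + c) + L x) ↔
      Set.InjOn (fun y => T (g y)) (Set.range fun x => θ x + c) := by
  constructor
  · rintro hinj _ ⟨x₁, rfl⟩ _ ⟨x₂, rfl⟩ hTg
    obtain ⟨k, hθk, hLk⟩ := hT (g (θ x₁ + c) + L x₁ - (g (θ x₂ + c) + L x₂)) <| by
      simp only [map_sub, map_add, hTL, hTg]; abel
    have hx : x₂ + k = x₁ := hinj <| by
      simp only [map_add, hθk, add_zero, hLk]; abel
    simp only [← hx, map_add, hθk, add_zero]
  · intro hinj x₁ x₂ hf
    have hTf : ∀ x, T (g (θ x + c) + L x) = T (g (θ x + c)) := by simp [hTL]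
    have hθ : θ x₁ + c = θ x₂ + c := hinj ⟨x₁, rfl⟩ ⟨x₂, rfl⟩ <| by
      simpa only [hTf] using congrArg T hf
    have hLx : L x₁ = L x₂ := by
      simp only at hf
      rw [hθ] at hf
      exact add_left_cancel hf
    refine sub_eq_zero.1 (hL _ ?_ ?_)
    · rw [map_sub, add_right_cancel hθ, sub_self]
    · rw [map_sub, hLx, sub_self]

theorem AddMonoidHom.ncard_range_mul_ncard_ker {G H : Type*} [AddGroup G] [AddGroup H] [Finite G]
    (θ : G →+ H) : (Set.range θ).ncard * {x | θ x = 0}.ncard = Nat.card G := by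
  rw [← AddSubgroup.card_mul_index θ.ker, AddSubgroup.index_ker, mul_comm,
    ← Nat.card_coe_set_eq, ← Nat.card_coe_set_eq]
  rfl

theorem AddMonoidHom.range_add_const_of_mem {G H : Type*} [AddGroup G] [AddGroup H]
    {θ : G →+ H} {c : H} (hc : c ∈ Set.range θ) : (Set.range fun x => θ x + c) = Set.range θ := by
  obtain ⟨x₀, rfl⟩ := hc
  ext y
  constructor
  · rintro ⟨x, rfl⟩
    exact ⟨x + x₀, map_add θ x x₀⟩
  · rintro ⟨x, rfl⟩
    exact ⟨x - x₀, by simp⟩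

theorem injOn_const_mul_iff {M α : Type*} [MonoidWithZero M] [IsCancelMulZero M] {f : α → M}
    {S : Set α} (hS : S.Nontrivial) (κ : M) :
    Set.InjOn (fun t => κ * f t) S ↔ κ ≠ 0 ∧ Set.InjOn f S := by
  refine ⟨fun h => ⟨?_, h.of_comp⟩, fun ⟨hκ, h⟩ => (mul_right_injective₀ hκ).comp_injOn h⟩
  rintro rfl
  obtain ⟨x, hx, y, hy, hxy⟩ := hS
  exact hxy (h hx hy (by simp))

theorem mem_zpowers_pow_of_pow_eq_one {G : Type*} [Group G] {ξ x : G} {k n : ℕ} (hn : 0 < n)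
    (hk : n * Nat.gcd k (orderOf ξ) = orderOf ξ) (hx : x ∈ Subgroup.zpowers ξ)
    (hxn : x ^ n = 1) : x ∈ Subgroup.zpowers (ξ ^ k) := by
  obtain ⟨i, rfl⟩ := Subgroup.mem_zpowers_iff.1 hx
  have hdvd : ((n * Nat.gcd k (orderOf ξ) : ℕ) : ℤ) ∣ i * n := by
    rw [hk, orderOf_dvd_iff_zpow_eq_one, zpow_mul, zpow_natCast, hxn]
  obtain ⟨i', rfl⟩ : (Nat.gcd k (orderOf ξ) : ℤ) ∣ i := by
    rw [Nat.cast_mul, mul_comm i] at hdvd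
    exact Int.dvd_of_mul_dvd_mul_left (by exact_mod_cast hn.ne') hdvd
  refine Subgroup.mem_zpowers_iff.2 ⟨Nat.gcdA k (orderOf ξ) * i', ?_⟩
  rw [Nat.gcd_eq_gcd_ab, ← zpow_natCast, ← zpow_mul, add_mul, zpow_add, mul_assoc, mul_assoc,
    zpow_mul ξ (orderOf ξ), zpow_natCast, pow_orderOf_eq_one, one_zpow, mul_one]

theorem sq_sub_one_eq (q : ℕ) : q ^ 2 - 1 = (q + 1) * (q - 1) := by
  rw [← Nat.sq_sub_sq, one_pow]

theorem mul_gcd_mul_eq {N d k n s : ℕ} (hd : 0 < d) (hds : d * s = N)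
    (hn : d = n * Nat.gcd k d) : n * Nat.gcd (k * s) N = N := by
  set g := Nat.gcd k d
  have h : g * (n * Nat.gcd (k * s) N) = g * N :=
    calc g * (n * Nat.gcd (k * s) N) = Nat.gcd (d * (k * s)) (d * N) := by
          rw [Nat.gcd_mul_left, hn]; ring
      _ = Nat.gcd (k * N) (d * N) := by rw [← hds]; ring_nf
      _ = g * N := Nat.gcd_mul_right k N d
  exact Nat.eq_of_mul_eq_mul_left (Nat.gcd_pos_of_pos_right k hd) h

theorem dvd_mul_of_eq_mul_gcd {d k m n s : ℕ} (hd : 0 < d) (hds : d * s = m * k)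
    (hn : d = n * Nat.gcd k d) : m ∣ s * n := by
  obtain ⟨w, hw⟩ := Nat.gcd_dvd_left k d
  refine ⟨w, Nat.eq_of_mul_eq_mul_right (Nat.gcd_pos_of_pos_right k hd) ?_⟩
  calc s * n * Nat.gcd k d = m * k := by rw [← hds, mul_assoc, ← hn, mul_comm]
    _ = m * w * Nat.gcd k d := by nth_rewrite 1 [hw]; ring

section Field

variable {F : Type*} [Field F] {q : ℕ}

theorem add_pow_of_card_eq_pow [Fintype F] (hq : IsPrimePow q) {m : ℕ}
    (hF : Fintype.card F = q ^ m) (x y : F) : (x + y) ^ q = x ^ q + y ^ q := by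
  obtain ⟨p, k, hp, -, rfl⟩ := hq
  have := Fact.mk hp.nat_prime
  have : CharP F p := charP_of_card_eq_prime_pow (f := k * m) (by rw [hF, pow_mul])
  exact add_pow_char_pow ..

theorem pow_pow_of_card_eq_sq [Fintype F] (hF : Fintype.card F = q ^ 2) (x : F) :
    (x ^ q) ^ q = x := by
  rw [← pow_mul, ← sq, ← hF, FiniteField.pow_card]

theorem pow_sub_one_eq_one_of_pow_eq_self {t : F} (hq : q ≠ 0) (ht0 : t ≠ 0) (ht : t ^ q = t) :
    t ^ (q - 1) = 1 :=
  mul_right_cancel₀ ht0 (by rw [pow_sub_one_mul hq, ht, one_mul])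

theorem ncard_setOf_mul_pow_eq_le (hq : 1 < q) {α : F} (hα : α ≠ 0) (β : F) :
    {x : F | α * x ^ q = β * x}.ncard ≤ q := by
  classical
  set p : F[X] := C α * X ^ q - C β * X
  have hp : p.natDegree = q := by
    have hβ : (C β * X).natDegree < q :=
      (natDegree_C_mul_le β X).trans_lt (natDegree_X_le.trans_lt hq)
    rw [natDegree_sub_eq_left_of_natDegree_lt (by rwa [natDegree_C_mul_X_pow q α hα]),
      natDegree_C_mul_X_pow q α hα]
  have hp0 : p ≠ 0 := fun h => by rw [h, natDegree_zero] at hp; omega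
  calc {x : F | α * x ^ q = β * x}.ncard ≤ (p.roots.toFinset : Set F).ncard :=
        Set.ncard_le_ncard (fun x hx => by simp [p, hp0, sub_eq_zero.2 hx.out]) (Set.toFinite _)
    _ = p.roots.toFinset.card := Set.ncard_coe_finset _
    _ ≤ Multiset.card p.roots := Multiset.toFinset_card_le _
    _ ≤ q := hp ▸ card_roots' p

section Frobenius

variable (hadd : ∀ x y : F, (x + y) ^ q = x ^ q + y ^ q)

def powRingHom : F →+* F := RingHom.mk' (powMonoidHom q) hadd

theorem powRingHom_apply (x : F) : powRingHom hadd x = x ^ q := rfl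

def fixedSubfield : Subfield F := (powRingHom hadd).eqLocusField (RingHom.id F)

theorem mem_fixedSubfield {t : F} : t ∈ fixedSubfield hadd ↔ t ^ q = t := Iff.rfl

def binomialHom (α β : F) : F →+ F :=
  AddMonoidHom.mk' (fun x => α * x ^ q + β * x) fun x y => by simp only [hadd]; ring

theorem binomialHom_apply (α β x : F) : binomialHom hadd α β x = α * x ^ q + β * x := rfl

include hadd in
theorem sub_pow_of_add_pow (x y : F) : (x - y) ^ q = x ^ q - y ^ q :=
  map_sub (powRingHom hadd) x y

theorem eval_mem_fixedSubfield {φ : F[X]} (hφ : ∀ i, φ.coeff i ^ q = φ.coeff i) {t : F}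
    (ht : t ∈ fixedSubfield hadd) : φ.eval t ∈ fixedSubfield hadd := by
  have hmap : φ.map (powRingHom hadd) = φ :=
    Polynomial.ext fun i => by simp [powRingHom_apply, hφ]
  rw [mem_fixedSubfield] at ht ⊢
  rw [← powRingHom_apply hadd, ← Polynomial.eval₂_hom, ← eval_map, hmap, powRingHom_apply, ht]

end Frobenius

section Binomial

variable (hadd : ∀ x y : F, (x + y) ^ q = x ^ q + y ^ q) {a b u v A B : F}
  (hA : A = b * u - a * v) (hB : B = a * u ^ q - b * v ^ q)

include hA hB in
theorem binomialHom_binomialHom_eq_zero (hfix : ∀ x : F, (x ^ q) ^ q = x)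
    (huv : u ^ (q + 1) = v ^ (q + 1)) (x : F) :
    binomialHom hadd A B (binomialHom hadd u v x) = 0 := by
  simp only [binomialHom_apply, hadd, mul_pow, hfix, hA, hB]
  linear_combination (b * x + a * x ^ q) * huv

include hA in
theorem eq_zero_of_binomialHom_eq_zero (hA0 : A ≠ 0) {k : F}
    (hθ : binomialHom hadd a b k = 0) (hL : binomialHom hadd u v k = 0) : k = 0 := by
  rw [binomialHom_apply] at hθ hL
  have hAk : A * k = 0 := by linear_combination u * hθ - a * hL + k * hA
  exact (mul_eq_zero.1 hAk).resolve_left hA0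

include hA hB in
/-- On `ker θ` one has `a L k = -A k`, which suggests the preimage `k = -a z / A`. -/
theorem exists_binomialHom_eq_zero_and_eq (hab : a ^ (q + 1) = b ^ (q + 1)) (hA0 : A ≠ 0)
    {z : F} (hz : binomialHom hadd A B z = 0) :
    ∃ k, binomialHom hadd a b k = 0 ∧ binomialHom hadd u v k = z := by
  have hAq : A ^ q = b ^ q * u ^ q - a ^ q * v ^ q := by
    rw [hA, sub_pow_of_add_pow hadd, mul_pow, mul_pow]
  have hneg : ∀ x : F, (-x) ^ q = -x ^ q := map_neg (powRingHom hadd)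
  rw [binomialHom_apply] at hz
  refine ⟨-(a * z / A), ?_, ?_⟩ <;> rw [binomialHom_apply, hneg, div_pow, mul_pow] <;>
    field_simp
  · linear_combination (-(a * a ^ q)) * hz + (a * z * a ^ q) * hB - (a * z * b) * hAq +
      (a * z * u ^ q) * hab
  · linear_combination (-(u * a ^ q)) * hz + (z * u * a ^ q) * hB - (z * u * b) * hAq +
      (z * u * u ^ q) * hab - (z * A ^ q) * hA

include hadd hA hB in
theorem mul_pow_eq_pow_mul_of_pow_succ_eq (hfix : ∀ x : F, (x ^ q) ^ q = x)
    (hab : a ^ (q + 1) = b ^ (q + 1)) : a * B ^ q = b ^ q * A := by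
  rw [hB, sub_pow_of_add_pow hadd, mul_pow, mul_pow, hfix, hfix, hA]
  linear_combination u * hab

theorem range_binomialHom [Fintype F] (hF : Fintype.card F = q ^ 2) (hq : 1 < q) (ha : a ≠ 0)
    (hab : a ^ (q + 1) = b ^ (q + 1)) :
    Set.range (binomialHom hadd a b) = {y | a * y ^ q = b ^ q * y} := by
  have hsub : Set.range (binomialHom hadd a b) ⊆ {y | a * y ^ q = b ^ q * y} := by
    rintro _ ⟨x, rfl⟩
    simp only [Set.mem_ofPred_eq, binomialHom_apply, hadd, mul_pow, pow_pow_of_card_eq_sq hF]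
    linear_combination x * hab
  have hker : {x | binomialHom hadd a b x = 0}.ncard ≤ q := by
    convert ncard_setOf_mul_pow_eq_le hq ha (-b) using 3 with x
    simp only [binomialHom_apply, neg_mul, eq_neg_iff_add_eq_zero]
  have hline := ncard_setOf_mul_pow_eq_le hq ha (b ^ q)
  have hrank := (binomialHom hadd a b).ncard_range_mul_ncard_ker
  rw [Nat.card_eq_fintype_card, hF] at hrank
  refine Set.eq_of_subset_of_ncard_le hsub (hline.trans ?_) (Set.toFinite _)
  nlinarith

theorem setOf_mul_pow_eq_eq_image {e : F} (ha : a ≠ 0) (he : e ≠ 0)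
    (hae : a * e ^ q = b ^ q * e) :
    {y | a * y ^ q = b ^ q * y} = (· * e) '' (fixedSubfield hadd : Set F) := by
  ext y
  simp only [Set.mem_ofPred_eq, Set.mem_image, SetLike.mem_coe, mem_fixedSubfield]
  constructor
  · intro hy
    refine ⟨y * e⁻¹, ?_, by field_simp⟩
    rw [mul_pow, inv_pow]
    field_simp
    have h : a * (y ^ q * e - y * e ^ q) = 0 := by linear_combination e * hy - y * hae
    linear_combination (mul_eq_zero.1 h).resolve_left ha
  · rintro ⟨t, ht, rfl⟩
    rw [mul_pow, ht]
    linear_combination t * hae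

end Binomial

theorem injective_iff_injOn_setOf [Fintype F] (hadd : ∀ x y : F, (x + y) ^ q = x ^ q + y ^ q)
    (hF : Fintype.card F = q ^ 2) (hq : 1 < q) (g : F → F) {a b c u v A B : F}
    (hA : A = b * u - a * v) (hB : B = a * u ^ q - b * v ^ q) (ha : a ≠ 0)
    (hab : a ^ (q + 1) = b ^ (q + 1)) (hc : a * c ^ q = b ^ q * c)
    (huv : u ^ (q + 1) = v ^ (q + 1)) (hA0 : A ≠ 0) :
    Function.Injective (fun x => g (a * x ^ q + b * x + c) + u * x ^ q + v * x) ↔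
      Set.InjOn (fun y => A * g y ^ q + B * g y) {y | a * y ^ q = b ^ q * y} := by
  have hrange := range_binomialHom hadd hF hq ha hab
  have key := injective_comp_add_add_iff_injOn (binomialHom hadd a b) (binomialHom hadd u v)
    (binomialHom hadd A B) g c
    (binomialHom_binomialHom_eq_zero hadd hA hB (pow_pow_of_card_eq_sq hF) huv)
    (fun _ => eq_zero_of_binomialHom_eq_zero hadd hA hA0)
    (fun _ => exists_binomialHom_eq_zero_and_eq hadd hA hB hab hA0)
  rw [AddMonoidHom.range_add_const_of_mem (hrange ▸ hc), hrange] at key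
  simpa only [binomialHom_apply, add_assoc] using key

/-- The origin of the constant `B + A^{1-r} B^{qr}` of the criterion. -/
theorem mul_pow_add_mul_pow_eq {A B e κ : F} {r : ℕ} (hA : A ≠ 0) (he : e ^ q = κ * e)
    (hB : B ^ q = κ * A) :
    A * (e ^ q) ^ r + B * e ^ r = (B + A * (A ^ r)⁻¹ * B ^ (q * r)) * e ^ r := by
  rw [pow_mul, he, hB, mul_pow, mul_pow]
  field_simp
  ring

theorem injOn_setOf_iff (hadd : ∀ x y : F, (x + y) ^ q = x ^ q + y ^ q) {a b e A B : F}
    {r s : ℕ} {φ : F[X]} (hφ : ∀ i, φ.coeff i ^ q = φ.coeff i) (ha : a ≠ 0) (he : e ≠ 0)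
    (hae : a * e ^ q = b ^ q * e) (hes : e ^ s = 1) (hA0 : A ≠ 0)
    (hAB : a * B ^ q = b ^ q * A) :
    Set.InjOn (fun y => A * (y ^ r * φ.eval (y ^ s)) ^ q + B * (y ^ r * φ.eval (y ^ s)))
        {y | a * y ^ q = b ^ q * y} ↔
      B + A * (A ^ r)⁻¹ * B ^ (q * r) ≠ 0 ∧
        Set.InjOn (fun t => t ^ r * φ.eval (t ^ s)) (fixedSubfield hadd) := by
  set K := fixedSubfield hadd
  have hκe : e ^ q = b ^ q / a * e := by field_simp; linear_combination hae
  have hκB : B ^ q = b ^ q / a * A := by field_simp; linear_combination hAB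
  have hTg : Set.EqOn
      ((fun y => A * (y ^ r * φ.eval (y ^ s)) ^ q + B * (y ^ r * φ.eval (y ^ s))) ∘ (· * e))
      (fun t => (B + A * (A ^ r)⁻¹ * B ^ (q * r)) * e ^ r * (t ^ r * φ.eval (t ^ s))) K := by
    intro t ht
    have hG : (t ^ r * φ.eval (t ^ s)) ^ q = t ^ r * φ.eval (t ^ s) :=
      (mem_fixedSubfield hadd).1 <|
        mul_mem (pow_mem ht r) (eval_mem_fixedSubfield hadd hφ (pow_mem ht s))
    calc A * ((t * e) ^ r * φ.eval ((t * e) ^ s)) ^ q + B * ((t * e) ^ r * φ.eval ((t * e) ^ s))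
        = (A * (e ^ q) ^ r + B * e ^ r) * (t ^ r * φ.eval (t ^ s)) := by
          rw [mul_pow t e s, hes, mul_one, mul_pow t e r, mul_right_comm, mul_pow, hG,
            ← pow_mul, ← pow_mul, mul_comm r q]
          ring
      _ = _ := by rw [mul_pow_add_mul_pow_eq hA0 hκe hκB]
  have hK : (K : Set F).Nontrivial := ⟨0, K.zero_mem, 1, K.one_mem, zero_ne_one⟩
  rw [setOf_mul_pow_eq_eq_image hadd ha he hae,
    ← Set.InjOn.comp_iff (mul_left_injective₀ he).injOn, hTg.injOn_iff, injOn_const_mul_iff hK,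
    mul_ne_zero_iff, and_assoc]
  simp [he]

section PowerMap

variable {K : Subfield F} {ψ : F → F} {r s n : ℕ}

theorem pow_mul_comp_pow_pow (ψ : F → F) (r s : ℕ) (t : F) :
    (t ^ r * ψ (t ^ s)) ^ s = (t ^ s) ^ r * ψ (t ^ s) ^ s := by
  rw [mul_pow, ← pow_mul, ← pow_mul, mul_comm r s]

theorem pow_mul_comp_pow_mul {ζ : F} (hζ : ζ ^ s = 1) (t : F) :
    (ζ * t) ^ r * ψ ((ζ * t) ^ s) = ζ ^ r * (t ^ r * ψ (t ^ s)) := by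
  rw [mul_pow ζ t s, hζ, one_mul, mul_pow, mul_assoc]

theorem bijOn_of_injOn_pow_mul_comp_pow [Finite F] (hr : 0 < r) (hrs : r.Coprime s)
    (hψ : ∀ t ∈ K, ψ t ∈ K) (hpow : ∀ t ∈ K, t ≠ 0 → (t ^ s) ^ n = 1)
    (hroot : ∀ x : F, x ^ n = 1 → ∃ t ∈ K, t ≠ 0 ∧ t ^ s = x)
    (hinj : Set.InjOn (fun t => t ^ r * ψ (t ^ s)) K) :
    Set.BijOn (fun x => x ^ r * ψ x ^ s) {x | x ^ n = 1} {x | x ^ n = 1} := by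
  have hGK : ∀ t ∈ K, t ^ r * ψ (t ^ s) ∈ K := fun t ht =>
    mul_mem (pow_mem ht r) (hψ _ (pow_mem ht s))
  have hG0 : ∀ t ∈ K, t ≠ 0 → t ^ r * ψ (t ^ s) ≠ 0 := fun t ht ht0 h =>
    ht0 (hinj ht K.zero_mem (by simp [h, hr.ne']))
  have hmaps : Set.MapsTo (fun x => x ^ r * ψ x ^ s) {x | x ^ n = 1} {x | x ^ n = 1} := by
    intro x hx
    obtain ⟨t, ht, ht0, rfl⟩ := hroot x hx
    show ((t ^ s) ^ r * ψ (t ^ s) ^ s) ^ n = 1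
    rw [← pow_mul_comp_pow_pow]
    exact hpow _ (hGK t ht) (hG0 t ht ht0)
  refine (Set.toFinite _).injOn_iff_bijOn_of_mapsTo hmaps |>.1 ?_
  intro x₁ hx₁ x₂ hx₂ hH
  obtain ⟨t₁, ht₁, -, rfl⟩ := hroot x₁ hx₁
  obtain ⟨t₂, ht₂, ht₂0, rfl⟩ := hroot x₂ hx₂
  set η := (t₁ ^ r * ψ (t₁ ^ s)) / (t₂ ^ r * ψ (t₂ ^ s))
  have hηs : η ^ s = 1 := by
    have hG₂ : (t₂ ^ s) ^ r * ψ (t₂ ^ s) ^ s ≠ 0 :=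
      pow_mul_comp_pow_pow ψ r s t₂ ▸ pow_ne_zero s (hG0 t₂ ht₂ ht₂0)
    rw [div_pow, pow_mul_comp_pow_pow, pow_mul_comp_pow_pow, div_eq_one_iff_eq hG₂]
    exact hH
  -- an `r`-th root of `η` inside `K`, available since `gcd(r, s) = 1`
  obtain ⟨m, hm⟩ :=
    exists_pow_eq_self_of_coprime (hrs.coprime_dvd_right (orderOf_dvd_of_pow_eq_one hηs))
  have hζs : (η ^ m) ^ s = 1 := by rw [← pow_mul, mul_comm, pow_mul, hηs, one_pow]
  have ht : η ^ m * t₂ = t₁ := by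
    refine hinj (mul_mem (pow_mem (div_mem (hGK t₁ ht₁) (hGK t₂ ht₂)) m) ht₂) ht₁ ?_
    show (η ^ m * t₂) ^ r * ψ ((η ^ m * t₂) ^ s) = t₁ ^ r * ψ (t₁ ^ s)
    rw [pow_mul_comp_pow_mul hζs, ← pow_mul, mul_comm m r, pow_mul, hm]
    exact div_mul_cancel₀ _ (hG0 t₂ ht₂ ht₂0)
  rw [← ht, mul_pow, hζs, one_mul]

theorem injOn_of_bijOn_pow_mul_pow [Finite F] (hr : 0 < r) (hs : 0 < s) (hn : 0 < n)
    (hrs : r.Coprime s) (hpow : ∀ t ∈ K, t ≠ 0 → (t ^ s) ^ n = 1)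
    (hbij : Set.BijOn (fun x => x ^ r * ψ x ^ s) {x | x ^ n = 1} {x | x ^ n = 1}) :
    Set.InjOn (fun t => t ^ r * ψ (t ^ s)) K := by
  have hG0 : ∀ t ∈ K, t ^ r * ψ (t ^ s) = 0 ↔ t = 0 := by
    refine fun t ht => ⟨fun h => by_contra fun ht0 => ?_, fun h => by simp [h, hr.ne']⟩
    have := hbij.mapsTo (hpow t ht ht0)
    simp_all [hs.ne', hn.ne']
  intro t₁ ht₁ t₂ ht₂ hG
  simp only at hG
  rcases eq_or_ne t₂ 0 with rfl | ht₂0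
  · exact (hG0 t₁ ht₁).1 (hG.trans ((hG0 0 K.zero_mem).2 rfl))
  have ht₁0 : t₁ ≠ 0 := fun h => ht₂0 ((hG0 t₂ ht₂).1 (hG ▸ (hG0 t₁ ht₁).2 h))
  have hts : t₁ ^ s = t₂ ^ s := hbij.injOn (hpow t₁ ht₁ ht₁0) (hpow t₂ ht₂ ht₂0) <| by
    simp only [← pow_mul_comp_pow_pow, hG]
  set ζ := t₁ / t₂
  have hζs : ζ ^ s = 1 := by rw [div_pow, hts, div_self (pow_ne_zero s ht₂0)]
  have hζr : ζ ^ r = 1 := by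
    have h : ζ ^ r * (t₂ ^ r * ψ (t₂ ^ s)) = 1 * (t₂ ^ r * ψ (t₂ ^ s)) := by
      rw [one_mul, ← pow_mul_comp_pow_mul hζs t₂, div_mul_cancel₀ t₁ ht₂0, hG]
    exact mul_right_cancel₀ (mt (hG0 t₂ ht₂).1 ht₂0) h
  exact (div_eq_one_iff_eq ht₂0).1 ((pow_eq_one_iff_of_coprime hrs).1 ⟨hζr, hζs⟩)

theorem injOn_pow_mul_comp_pow_iff_bijOn [Finite F] (hr : 0 < r) (hs : 0 < s) (hn : 0 < n)
    (hrs : r.Coprime s) (hψ : ∀ t ∈ K, ψ t ∈ K) (hpow : ∀ t ∈ K, t ≠ 0 → (t ^ s) ^ n = 1)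
    (hroot : ∀ x : F, x ^ n = 1 → ∃ t ∈ K, t ≠ 0 ∧ t ^ s = x) :
    Set.InjOn (fun t => t ^ r * ψ (t ^ s)) K ↔
      Set.BijOn (fun x => x ^ r * ψ x ^ s) {x | x ^ n = 1} {x | x ^ n = 1} :=
  ⟨bijOn_of_injOn_pow_mul_comp_pow hr hrs hψ hpow hroot,
    injOn_of_bijOn_pow_mul_pow hr hs hn hrs hpow⟩

end PowerMap

section RootsOfUnity

variable (hadd : ∀ x y : F, (x + y) ^ q = x ^ q + y ^ q) {d n : ℕ} (hd : 0 < d)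
  (hdvd : d ∣ q ^ 2 - 1) (hn : d = n * Nat.gcd (q + 1) d)

include hd hdvd hn in
theorem pow_pow_eq_one_of_mem_fixedSubfield (hq : q ≠ 0) {t : F} (ht : t ∈ fixedSubfield hadd)
    (ht0 : t ≠ 0) : (t ^ ((q ^ 2 - 1) / d)) ^ n = 1 := by
  obtain ⟨w, hw⟩ := dvd_mul_of_eq_mul_gcd (m := q - 1) hd
    (by rw [Nat.mul_div_cancel' hdvd, sq_sub_one_eq, mul_comm]) hn
  rw [← pow_mul, hw, pow_mul, pow_sub_one_eq_one_of_pow_eq_self hq ht0 ht, one_pow]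

include hd hdvd hn in
theorem exists_mem_fixedSubfield_pow_eq [Fintype F] (hF : Fintype.card F = q ^ 2) {ξ : F}
    (hξ : orderOf ξ = q ^ 2 - 1) {x : F} (hx : x ^ n = 1) :
    ∃ t ∈ fixedSubfield hadd, t ≠ 0 ∧ t ^ ((q ^ 2 - 1) / d) = x := by
  classical
  have hn0 : 0 < n := Nat.pos_of_ne_zero <| by rintro rfl; omega
  have hx0 : x ≠ 0 := by rintro rfl; simp [hn0.ne'] at hx
  have hq2 : 1 < q ^ 2 := hF ▸ Fintype.one_lt_card
  have hq : q ≠ 0 := by rintro rfl; simp at hq2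
  have hξ0 : ξ ≠ 0 := by rintro rfl; rw [orderOf_zero] at hξ; omega
  set Ξ : Fˣ := Units.mk0 ξ hξ0
  have hΞ : orderOf Ξ = q ^ 2 - 1 := by rw [← orderOf_units]; exact hξ
  have htop : Subgroup.zpowers Ξ = ⊤ := Subgroup.eq_top_of_card_eq _ <| by
    rw [Nat.card_zpowers, hΞ, Nat.card_eq_fintype_card, Fintype.card_units, hF]
  -- `x` is a power of `Ξ ^ ((q + 1) s)`, and `Ξ ^ (q + 1)` generates `𝔽_q^*`
  obtain ⟨m, hm⟩ := Subgroup.mem_zpowers_iff.1 <|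
    mem_zpowers_pow_of_pow_eq_one (k := (q + 1) * ((q ^ 2 - 1) / d)) hn0
      (by rw [hΞ]; exact mul_gcd_mul_eq hd (Nat.mul_div_cancel' hdvd) hn)
      (htop ▸ Subgroup.mem_top (Units.mk0 x hx0)) (Units.ext (by simp [hx]))
  set T : Fˣ := (Ξ ^ (q + 1)) ^ m
  have hT : T ^ (q - 1) = 1 := by
    rw [← zpow_natCast, ← zpow_mul, mul_comm, zpow_mul, zpow_natCast, ← pow_mul, ← sq_sub_one_eq,
      ← hΞ, pow_orderOf_eq_one, one_zpow]
  have hTs : T ^ ((q ^ 2 - 1) / d) = Units.mk0 x hx0 := by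
    rw [← zpow_natCast, ← zpow_mul, mul_comm, zpow_mul, zpow_natCast, ← pow_mul, hm]
  refine ⟨T, ?_, T.ne_zero, ?_⟩
  · rw [mem_fixedSubfield, ← pow_sub_one_mul hq, ← Units.val_pow_eq_pow_val, hT, Units.val_one,
      one_mul]
  · rw [← Units.val_pow_eq_pow_val, hTs, Units.val_mk0]

end RootsOfUnity

theorem exists_ne_zero_zpow_eq_pow_sub_one {ξ : F} {N D s n : ℕ} (hq : q ≠ 0)
    (hξ : orderOf ξ = N) (hN : D * s * n = N) (hN0 : 0 < N) (j : ℤ) :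
    ∃ ζ : F, ζ ≠ 0 ∧ ζ ^ (s * n) = 1 ∧ ξ ^ (((q : ℤ) - 1) * j * D) = ζ ^ (q - 1) := by
  have hξ0 : ξ ≠ 0 := by rintro rfl; rw [orderOf_zero] at hξ; omega
  refine ⟨ξ ^ (j * D), zpow_ne_zero _ hξ0, ?_, ?_⟩ <;> rw [← zpow_natCast, ← zpow_mul]
  · rw [show j * D * ((s * n : ℕ) : ℤ) = N * j by rw [← hN]; push_cast; ring, zpow_mul,
      zpow_natCast, ← hξ, pow_orderOf_eq_one, one_zpow]
  · congr 1
    push_cast [Nat.one_le_iff_ne_zero.2 hq]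
    ring

/-- The point `e = t ζ^q` of the line, rescaled by `t ∈ 𝔽_q` so that `e ^ s = 1`. -/
theorem exists_mul_pow_eq_pow_mul (hadd : ∀ x y : F, (x + y) ^ q = x ^ q + y ^ q)
    (hfix : ∀ x : F, (x ^ q) ^ q = x) (hq : q ≠ 0) {s n : ℕ} {a ζ : F} (hζ0 : ζ ≠ 0)
    (hζ : ζ ^ (s * n) = 1)
    (hroot : ∀ x : F, x ^ n = 1 → ∃ t ∈ fixedSubfield hadd, t ≠ 0 ∧ t ^ s = x) :
    ∃ e ≠ 0, a * e ^ q = (ζ ^ (q - 1) * a ^ q) ^ q * e ∧ e ^ s = 1 := by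
  have hζsn : ((ζ ^ q) ^ s) ^ n = 1 := by rw [← pow_mul, pow_right_comm, hζ, one_pow]
  obtain ⟨t, htq, ht0, hts⟩ := hroot ((ζ ^ q) ^ s)⁻¹ (by rw [inv_pow, hζsn, inv_one])
  refine ⟨t * ζ ^ q, mul_ne_zero ht0 (pow_ne_zero q hζ0), ?_, ?_⟩
  · have hζq : (ζ ^ (q - 1)) ^ q * ζ ^ q = (ζ ^ q) ^ q := by rw [← mul_pow, pow_sub_one_mul hq]
    rw [mul_pow, mul_pow, hfix a, (mem_fixedSubfield hadd).1 htq]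
    linear_combination (-(a * t)) * hζq
  · rw [mul_pow, hts, inv_mul_cancel₀ (pow_ne_zero _ (pow_ne_zero _ hζ0))]

theorem pow_succ_eq_of_mul_pow_eq (hfix : ∀ x : F, (x ^ q) ^ q = x) {a b e : F} (he : e ≠ 0)
    (h : a * e ^ q = b ^ q * e) : a ^ (q + 1) = b ^ (q + 1) := by
  have hconj : a ^ q * e = b * e ^ q := by simpa only [mul_pow, hfix] using congrArg (· ^ q) h
  have h' : a ^ (q + 1) * e ^ (q + 1) = b ^ (q + 1) * e ^ (q + 1) := by
    linear_combination e * a ^ q * h + b ^ q * e * hconj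
  exact mul_right_cancel₀ (pow_ne_zero _ he) h'

end Field

theorem stmt_17 {F : Type*} [Field F] [Fintype F]
    (q : ℕ) (hq : IsPrimePow q) (hF : Fintype.card F = q ^ 2)
    (d n : ℕ) (hd0 : 0 < d) (hdvd : d ∣ q ^ 2 - 1)
    (hn : d = n * Nat.gcd (q + 1) d)
    (ξ : F) (hξ : orderOf ξ = q ^ 2 - 1)
    (a b c u v : F) (j : ℤ) (hab : a * b ≠ 0)
    (hb : b = ξ ^ (((q : ℤ) - 1) * j * ((d / n : ℕ) : ℤ)) * a ^ q)
    (hac : a * c ^ q = b ^ q * c)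
    (huv : u ^ (q + 1) = v ^ (q + 1)) (hA0 : b * u ≠ a * v)
    (r : ℕ) (hr : 0 < r) (hgcd : Nat.gcd r ((q ^ 2 - 1) / d) = 1)
    (φ : Polynomial F) (hφ : ∀ i : ℕ, (φ.coeff i) ^ q = φ.coeff i)
    (A B : F) (hA : A = b * u - a * v) (hB : B = a * u ^ q - b * v ^ q)
    (f : F → F)
    (hf : f = fun x => (a * x ^ q + b * x + c) ^ r *
      φ.eval ((a * x ^ q + b * x + c) ^ ((q ^ 2 - 1) / d)) + u * x ^ q + v * x) :
    Function.Bijective f ↔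
      (B + A * (A ^ r)⁻¹ * B ^ (q * r) ≠ 0 ∧
        Set.BijOn (fun x => x ^ r * (φ.eval x) ^ ((q ^ 2 - 1) / d))
          {x : F | x ^ n = 1} {x : F | x ^ n = 1}) := by
  have hq1 : 1 < q := hq.one_lt
  have hadd := add_pow_of_card_eq_pow hq hF
  have hfix := pow_pow_of_card_eq_sq hF
  have hds : d * ((q ^ 2 - 1) / d) = q ^ 2 - 1 := Nat.mul_div_cancel' hdvd
  have hN0 : 0 < q ^ 2 - 1 := Nat.sub_pos_of_lt (Nat.one_lt_pow two_ne_zero hq1)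
  have hn0 : 0 < n := Nat.pos_of_ne_zero <| by rintro rfl; omega
  have hs0 : 0 < (q ^ 2 - 1) / d := Nat.pos_of_ne_zero fun h => by rw [h, mul_zero] at hds; omega
  have hroot := fun x (hx : x ^ n = 1) =>
    exists_mem_fixedSubfield_pow_eq hadd hd0 hdvd hn hF hξ hx
  obtain ⟨ζ, hζ0, hζ, hξζ⟩ := exists_ne_zero_zpow_eq_pow_sub_one (q := q) (by omega) hξ
    (by rw [mul_right_comm, Nat.div_mul_cancel ⟨_, hn⟩, hds]) hN0 j
  obtain ⟨e, he0, hae, hes⟩ :=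
    exists_mul_pow_eq_pow_mul hadd hfix (by omega) hζ0 hζ hroot (a := a)
  rw [← hξζ, ← hb] at hae
  have ha : a ≠ 0 := left_ne_zero_of_mul hab
  replace hab : a ^ (q + 1) = b ^ (q + 1) := pow_succ_eq_of_mul_pow_eq hfix he0 hae
  replace hA0 : A ≠ 0 := hA ▸ sub_ne_zero.2 hA0
  have hAB := mul_pow_eq_pow_mul_of_pow_succ_eq hadd hA hB hfix hab
  rw [hf, ← Finite.injective_iff_bijective]
  exact (injective_iff_injOn_setOf hadd hF hq1 (fun y => y ^ r * φ.eval (y ^ ((q ^ 2 - 1) / d)))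
    hA hB ha hab hac huv hA0).trans <|
    (injOn_setOf_iff hadd hφ ha he0 hae hes hA0 hAB).trans <|
    and_congr Iff.rfl <| injOn_pow_mul_comp_pow_iff_bijOn hr hs0 hn0
      (Nat.coprime_iff_gcd_eq_one.2 hgcd) (fun _ => eval_mem_fixedSubfield hadd hφ)
      (fun _ => pow_pow_eq_one_of_mem_fixedSubfield hadd hd0 hdvd hn (by omega)) hroot
end
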